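/- arXiv:2311.00973 — 7 statements merged into one kernel-verified Lean document; each statement's English description precedes it below -/
import Mathlib

section
/- Let X_1, ..., X_n be vectors in ℝ^d and let V be a d×d positive definite real matrix. Define V̄_t = V + ∑_{s=1}^t X_s X_sᵀ for 0 ≤ t ≤ n (so V̄_0 = V). Then log(det(V̄_n) / det(V)) ≤ ∑_{t=1}^n ‖X_t‖²_{V̄_{t-1}^{-1}}. -/
open Matrix Finset

/-!
Each rank-one update multiplies the determinant by `1 + ‖X_t‖²_{V̄_{t-1}⁻¹}` (matrix determinant
lemma), so `log (det V̄_n / det V)` is the sum of `log (1 + ‖X_t‖²_{V̄_{t-1}⁻¹})`, and each term is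
bounded by `log (1 + q) ≤ q`.
-/

/-- The weighted norm `‖x‖_A = √(xᵀ A x)`. -/
noncomputable def quadNorm {d : ℕ} (A : Matrix (Fin d) (Fin d) ℝ) (x : Fin d → ℝ) : ℝ :=
  Real.sqrt (x ⬝ᵥ A *ᵥ x)

theorem quadNorm_sq {d : ℕ} {A : Matrix (Fin d) (Fin d) ℝ} (hA : A.PosSemidef) (x : Fin d → ℝ) :
    quadNorm A x ^ 2 = x ⬝ᵥ A *ᵥ x :=
  Real.sq_sqrt (by simpa only [star_trivial] using hA.dotProduct_mulVec_nonneg x)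

theorem posSemidef_vecMulVec_self {m : Type*} [Fintype m] (x : m → ℝ) : (vecMulVec x x).PosSemidef := by
  simpa only [star_trivial] using posSemidef_vecMulVec_self_star x

theorem det_add_vecMulVec {m α : Type*} [Fintype m] [DecidableEq m] [CommRing α]
    {A : Matrix m m α} (hA : IsUnit A.det) (u v : m → α) :
    (A + vecMulVec u v).det = A.det * (1 + v ⬝ᵥ A⁻¹ *ᵥ u) := by
  have hfactor : A + vecMulVec u v = A * (1 + vecMulVec (A⁻¹ *ᵥ u) v) := by
    rw [mul_add, mul_one, mul_vecMulVec, mulVec_mulVec, mul_nonsing_inv A hA, one_mulVec]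
  rw [hfactor, det_mul, vecMulVec_eq Unit, det_one_add_replicateCol_mul_replicateRow]

theorem log_det_add_vecMulVec_self_div_le {m : Type*} [Fintype m] [DecidableEq m]
    {A : Matrix m m ℝ} (hA : A.PosDef) (x : m → ℝ) :
    Real.log ((A + vecMulVec x x).det / A.det) ≤ x ⬝ᵥ A⁻¹ *ᵥ x := by
  have hq : 0 ≤ x ⬝ᵥ A⁻¹ *ᵥ x := by
    simpa only [star_trivial] using hA.inv.posSemidef.dotProduct_mulVec_nonneg x
  rw [det_add_vecMulVec hA.det_pos.ne'.isUnit, mul_div_cancel_left₀ _ hA.det_pos.ne']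
  linarith [Real.log_le_sub_one_of_pos (by linarith : (0 : ℝ) < 1 + x ⬝ᵥ A⁻¹ *ᵥ x)]

section RankOneUpdates

variable {m : Type*} [Fintype m] {M : ℕ → Matrix m m ℝ} {X : ℕ → m → ℝ}

theorem posDef_of_rankOne_updates (hM₀ : (M 0).PosDef)
    (hM : ∀ t, M (t + 1) = M t + vecMulVec (X t) (X t)) (t : ℕ) : (M t).PosDef := by
  induction t with
  | zero => exact hM₀
  | succ t ih => rw [hM t]; exact ih.add_posSemidef (posSemidef_vecMulVec_self (X t))

theorem log_det_div_le_sum_of_rankOne_updates [DecidableEq m] (hM₀ : (M 0).PosDef)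
    (hM : ∀ t, M (t + 1) = M t + vecMulVec (X t) (X t)) (n : ℕ) :
    Real.log ((M n).det / (M 0).det) ≤ ∑ t ∈ range n, X t ⬝ᵥ (M t)⁻¹ *ᵥ X t := by
  have hpos := posDef_of_rankOne_updates hM₀ hM
  have hdet : ∀ t, (M t).det ≠ 0 := fun t => (hpos t).det_pos.ne'
  calc Real.log ((M n).det / (M 0).det)
      = ∑ t ∈ range n, Real.log ((M (t + 1)).det / (M t).det) := by
        simp only [Real.log_div (hdet _) (hdet _)]
        exact (sum_range_sub (fun t => Real.log (M t).det) n).symm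
    _ ≤ ∑ t ∈ range n, X t ⬝ᵥ (M t)⁻¹ *ᵥ X t := by
        gcongr with t
        rw [hM t]
        exact log_det_add_vecMulVec_self_div_le (hpos t) (X t)

end RankOneUpdates

/-- `Vbar t` is `V̄_t`, with indices shifted so that `X t` (for `t ∈ range n`) is the
`(t+1)`-st vector. -/
theorem stmt0 {d : ℕ} (n : ℕ) (X : ℕ → Fin d → ℝ)
    (V : Matrix (Fin d) (Fin d) ℝ) (hV : V.PosDef)
    (Vbar : ℕ → Matrix (Fin d) (Fin d) ℝ)
    (hVbar : ∀ t, Vbar t = V + ∑ s ∈ Finset.range t, vecMulVec (X s) (X s)) :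
    Real.log ((Vbar n).det / V.det) ≤
      ∑ t ∈ Finset.range n, (quadNorm ((Vbar t)⁻¹) (X t)) ^ 2 := by
  have hVbar₀ : Vbar 0 = V := by simp [hVbar 0]
  have hstep : ∀ t, Vbar (t + 1) = Vbar t + vecMulVec (X t) (X t) := fun t => by
    rw [hVbar, hVbar, sum_range_succ, add_assoc]
  have hVbar₀_posDef : (Vbar 0).PosDef := hVbar₀ ▸ hV
  have hpos := posDef_of_rankOne_updates hVbar₀_posDef hstep
  simp only [quadNorm_sq (hpos _).inv.posSemidef, ← hVbar₀]
  exact log_det_div_le_sum_of_rankOne_updates hVbar₀_posDef hstep n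
end

section
/- Let X_1, ..., X_n be vectors in ℝ^d with ‖X_t‖_2 ≤ L for all t, and let V be a d×d positive definite real matrix whose smallest eigenvalue satisfies λ_min(V) ≥ max(1, L²). Define V̄_t = V + ∑_{s=1}^t X_s X_sᵀ for 0 ≤ t ≤ n. Then ∑_{t=1}^n ‖X_t‖²_{V̄_{t-1}^{-1}} ≤ 2 log(det(V̄_n) / det(V)). -/
open Matrix Finset

/-- The Euclidean (ℓ₂) norm of a vector in ℝ^d. -/
noncomputable def l2norm {d : ℕ} (x : Fin d → ℝ) : ℝ :=
  Real.sqrt (∑ i, x i ^ 2)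

theorem Real.le_two_mul_log_one_add {x : ℝ} (h0 : 0 ≤ x) (h2 : x ≤ 2) :
    x ≤ 2 * Real.log (1 + x) := by
  have hfrac : x ≤ 2 * (2 * x / (x + 2)) := by
    rw [mul_div_assoc', le_div_iff₀ (by linarith)]
    nlinarith
  linarith [Real.le_log_one_add_of_nonneg h0]

namespace Matrix

variable {n : Type*} [Fintype n] [DecidableEq n]

theorem det_add_vecMulVec {R : Type*} [CommRing R] {A : Matrix n n R} (hA : IsUnit A.det)
    (u v : n → R) : (A + vecMulVec u v).det = A.det * (1 + v ⬝ᵥ A⁻¹ *ᵥ u) := by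
  rw [vecMulVec_eq Unit, det_add_replicateCol_mul_replicateRow hA]
  congr 1
  rw [det_unique, add_apply, one_apply_eq, ← replicateRow_vecMul,
    replicateRow_mul_replicateCol_apply, dotProduct_mulVec]

theorem det_eq_det_mul_prod_of_add_vecMulVec {R : Type*} [CommRing R]
    (M : ℕ → Matrix n n R) (u v : ℕ → n → R) (hM : ∀ t, M (t + 1) = M t + vecMulVec (u t) (v t))
    (hdet : ∀ t, IsUnit (M t).det) (N : ℕ) :
    (M N).det = (M 0).det * ∏ t ∈ range N, (1 + v t ⬝ᵥ (M t)⁻¹ *ᵥ u t) := by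
  induction N with
  | zero => simp
  | succ N ih => rw [hM, det_add_vecMulVec (hdet N), ih, prod_range_succ, mul_assoc]

open scoped MatrixOrder in
theorem IsHermitian.mul_dotProduct_self_le {A : Matrix n n ℝ} (hA : A.IsHermitian) {c : ℝ}
    (hc : ∀ i, c ≤ hA.eigenvalues i) (y : n → ℝ) : c * (y ⬝ᵥ y) ≤ y ⬝ᵥ A *ᵥ y := by
  have hle : algebraMap ℝ (Matrix n n ℝ) c ≤ A :=
    (algebraMap_le_iff_le_spectrum hA.isSelfAdjoint).2 <| by
      rw [hA.spectrum_real_eq_range_eigenvalues]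
      rintro _ ⟨i, rfl⟩
      exact hc i
  have := (le_iff.1 hle).dotProduct_mulVec_nonneg y
  rw [Algebra.algebraMap_eq_smul_one, star_trivial, sub_mulVec, dotProduct_sub, smul_mulVec,
    one_mulVec, dotProduct_smul, smul_eq_mul] at this
  linarith

theorem dotProduct_inv_mulVec_self_le_one {A : Matrix n n ℝ} (hA : IsUnit A.det) {c : ℝ}
    (hc : ∀ y, c * (y ⬝ᵥ y) ≤ y ⬝ᵥ A *ᵥ y) {x : n → ℝ} (hx : x ⬝ᵥ x ≤ c) :
    x ⬝ᵥ A⁻¹ *ᵥ x ≤ 1 := by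
  set y := A⁻¹ *ᵥ x
  have hAy : A *ᵥ y = x := by rw [mulVec_mulVec, mul_nonsing_inv _ hA, one_mulVec]
  have hlower : c * (y ⬝ᵥ y) ≤ x ⬝ᵥ y := by simpa [hAy, dotProduct_comm] using hc y
  have hcs : (x ⬝ᵥ y) ^ 2 ≤ (x ⬝ᵥ x) * (y ⬝ᵥ y) := by
    simpa [dotProduct, sq] using sum_mul_sq_le_sq_mul_sq univ x y
  have hyy : 0 ≤ y ⬝ᵥ y := by simpa using dotProduct_star_self_nonneg y
  have hc0 : 0 ≤ c := (dotProduct_star_self_nonneg x).trans hx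
  -- `(x ⬝ y)² ≤ c (y ⬝ y) ≤ x ⬝ y`, and `x ⬝ y ≥ 0`
  nlinarith [mul_le_mul_of_nonneg_right hx hyy, mul_nonneg hc0 hyy]

end Matrix

/-- Elliptical potential lemma (Lemma 11 in Abbasi-Yadkori et al., third part):
if `λ_min(V) ≥ max(1, L²)` then `∑_{t=1}^n ‖X_t‖²_{V̄_{t-1}⁻¹} ≤ 2 log(det(V̄_n)/det V)`. -/
theorem stmt2 {d : ℕ} (n : ℕ) (L : ℝ) (X : ℕ → Fin d → ℝ)
    (hX : ∀ t < n, l2norm (X t) ≤ L)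
    (V : Matrix (Fin d) (Fin d) ℝ) (hV : V.PosDef)
    (hEig : ∀ i, max 1 (L ^ 2) ≤ hV.1.eigenvalues i)
    (Vbar : ℕ → Matrix (Fin d) (Fin d) ℝ)
    (hVbar : ∀ t, Vbar t = V + ∑ s ∈ Finset.range t, vecMulVec (X s) (X s)) :
    ∑ t ∈ Finset.range n, (quadNorm ((Vbar t)⁻¹) (X t)) ^ 2 ≤
      2 * Real.log ((Vbar n).det / V.det) := by
  set u : ℕ → ℝ := fun t => X t ⬝ᵥ (Vbar t)⁻¹ *ᵥ X t
  have hgram : ∀ t, (∑ s ∈ range t, vecMulVec (X s) (X s)).PosSemidef := fun t =>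
    posSemidef_sum _ fun s _ => by simpa using posSemidef_vecMulVec_self_star (X s)
  have hPos : ∀ t, (Vbar t).PosDef := fun t => hVbar t ▸ hV.add_posSemidef (hgram t)
  have hu0 : ∀ t, 0 ≤ u t := fun t => by
    simpa using (hPos t).inv.posSemidef.dotProduct_mulVec_nonneg (X t)
  have hu1 : ∀ t < n, u t ≤ 1 := fun t ht => by
    refine dotProduct_inv_mulVec_self_le_one (hPos t).det_pos.ne'.isUnit (c := L ^ 2)
      (fun y => ?_) ?_
    · have hgram_nonneg := (hgram t).dotProduct_mulVec_nonneg y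
      rw [star_trivial] at hgram_nonneg
      rw [hVbar t, add_mulVec, dotProduct_add]
      linarith [hV.1.mul_dotProduct_self_le (fun i => (le_max_right _ _).trans (hEig i)) y]
    · simpa [dotProduct, sq] using (Real.sqrt_le_iff.1 (hX t ht)).2
  have hdet_prod := det_eq_det_mul_prod_of_add_vecMulVec Vbar X X
    (fun t => by rw [hVbar, hVbar, sum_range_succ, add_assoc])
    (fun t => (hPos t).det_pos.ne'.isUnit) n
  rw [hVbar 0, range_zero, sum_empty, add_zero] at hdet_prod
  calc ∑ t ∈ range n, (quadNorm ((Vbar t)⁻¹) (X t)) ^ 2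
      = ∑ t ∈ range n, u t := sum_congr rfl fun t _ => Real.sq_sqrt (hu0 t)
    _ ≤ ∑ t ∈ range n, 2 * Real.log (1 + u t) := sum_le_sum fun t ht =>
      Real.le_two_mul_log_one_add (hu0 t) ((hu1 t (mem_range.1 ht)).trans one_le_two)
    _ = 2 * Real.log ((Vbar n).det / V.det) := by
      rw [hdet_prod, mul_div_cancel_left₀ _ hV.det_pos.ne', ← mul_sum,
        Real.log_prod fun t _ => by linarith [hu0 t]]
end

section
/- Let B be a d×d positive definite real matrix and C a d×d positive semidefinite real matrix, and set A = B + C. Then for every nonzero x ∈ ℝ^d, (xᵀ A x)/(xᵀ B x) ≤ det(A)/det(B); in particular, sup_{x ≠ 0} (xᵀ A x)/(xᵀ B x) ≤ det(A)/det(B). -/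
/-!
Writing `B = Sᴴ S` with `S` invertible and `M = S⁻ᴴ A S⁻¹`, the hypothesis `B ≤ A` becomes `1 ≤ M`
in the Loewner order. All eigenvalues of `M` are then at least `1`, so each of them is at most their
product `det M = det A / det B`, i.e. `M ≤ (det A / det B) • 1`. Conjugating back by `S` gives
`A ≤ (det A / det B) • B`, which is the claimed bound on the quadratic forms.
-/

open Matrix
open scoped MatrixOrder

namespace Matrix

variable {n : Type*} [Fintype n]

lemma dotProduct_mulVec_le_of_le {A B : Matrix n n ℝ} (h : A ≤ B) (x : n → ℝ) :
    x ⬝ᵥ A *ᵥ x ≤ x ⬝ᵥ B *ᵥ x := by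
  simpa [sub_mulVec] using (le_iff.mp h).dotProduct_mulVec_nonneg x

variable [DecidableEq n]

lemma le_det_smul_one_of_one_le {M : Matrix n n ℝ} (hM : 1 ≤ M) :
    M ≤ M.det • (1 : Matrix n n ℝ) := by
  have hMh : M.IsHermitian := by
    simpa using (le_iff.mp hM).isHermitian.add (isHermitian_one : (1 : Matrix n n ℝ).IsHermitian)
  have one_le_eig : ∀ i, 1 ≤ hMh.eigenvalues i := by
    have := (algebraMap_le_iff_le_spectrum (r := (1 : ℝ)) hMh.isSelfAdjoint).mp (by simpa using hM)
    exact fun i => this _ (hMh.eigenvalues_mem_spectrum_real i)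
  rw [← Algebra.algebraMap_eq_smul_one, le_algebraMap_iff_spectrum_le hMh.isSelfAdjoint,
    hMh.spectrum_real_eq_range_eigenvalues]
  rintro _ ⟨i, rfl⟩
  rw [hMh.det_eq_prod_eigenvalues]
  simpa using Multiset.mem_le_prod_of_one_le one_le_eig (Finset.mem_univ i)

lemma le_det_div_det_smul_of_le {A B : Matrix n n ℝ} (hB : B.PosDef) (hBA : B ≤ A) :
    A ≤ (A.det / B.det) • B := by
  obtain ⟨S, hS, rfl⟩ :=
    CStarAlgebra.isStrictlyPositive_iff_eq_star_mul_self.mp hB.isStrictlyPositive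
  lift S to (Matrix n n ℝ)ˣ using hS
  set M := star (↑S⁻¹ : Matrix n n ℝ) * A * (↑S⁻¹ : Matrix n n ℝ) with hM
  have hAM : A = star (S : Matrix n n ℝ) * M * S := by
    rw [hM, ← mul_assoc, ← mul_assoc, ← star_mul, Units.inv_mul, star_one, one_mul, mul_assoc,
      Units.inv_mul, mul_one]
  have one_le_M : 1 ≤ M := by
    have := star_left_conjugate_le_conjugate hBA (↑S⁻¹ : Matrix n n ℝ)
    rwa [← mul_assoc, ← star_mul, mul_assoc, Units.mul_inv, star_one, one_mul] at this
  have det_M : M.det = A.det / (star (S : Matrix n n ℝ) * S).det := by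
    rw [eq_div_iff hB.det_pos.ne']
    conv_rhs => rw [hAM]
    simp only [det_mul]
    ring
  rw [← det_M]
  calc A = star (S : Matrix n n ℝ) * M * S := hAM
    _ ≤ star (S : Matrix n n ℝ) * (M.det • 1) * S :=
      star_left_conjugate_le_conjugate (le_det_smul_one_of_one_le one_le_M) _
    _ = M.det • (star (S : Matrix n n ℝ) * S) := by simp

end Matrix

/-- Lemma 12 in Abbasi-Yadkori et al.: if `A = B + C` with `B ≻ 0` and `C ⪰ 0`, then
`(xᵀAx)/(xᵀBx) ≤ det(A)/det(B)` for all `x ≠ 0`; in particular the supremum over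
nonzero `x` is bounded by `det(A)/det(B)`. -/
theorem stmt3 {d : ℕ} (B C A : Matrix (Fin d) (Fin d) ℝ)
    (hB : B.PosDef) (hC : C.PosSemidef) (hA : A = B + C) :
    (∀ x : Fin d → ℝ, x ≠ 0 → (x ⬝ᵥ A *ᵥ x) / (x ⬝ᵥ B *ᵥ x) ≤ A.det / B.det) ∧
      (⨆ x : {x : Fin d → ℝ // x ≠ 0},
          ((x : Fin d → ℝ) ⬝ᵥ A *ᵥ (x : Fin d → ℝ)) /
            ((x : Fin d → ℝ) ⬝ᵥ B *ᵥ (x : Fin d → ℝ))) ≤ A.det / B.det := by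
  have hBA : B ≤ A := by rwa [le_iff, hA, add_sub_cancel_left]
  have hAB := le_det_div_det_smul_of_le hB hBA
  have ratio_le : ∀ x : Fin d → ℝ, x ≠ 0 →
      (x ⬝ᵥ A *ᵥ x) / (x ⬝ᵥ B *ᵥ x) ≤ A.det / B.det := by
    intro x hx
    rw [div_le_iff₀ (by simpa using hB.dotProduct_mulVec_pos hx)]
    simpa [smul_mulVec, mul_comm] using dotProduct_mulVec_le_of_le hAB x
  have hA_pos : A.PosDef := hA ▸ hB.add_posSemidef hC
  exact ⟨ratio_le, Real.iSup_le (fun x => ratio_le x x.2) (div_pos hA_pos.det_pos hB.det_pos).le⟩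
end

section
/- Let B be a d×d positive definite real matrix, C a d×d positive semidefinite real matrix, and κ > 0. If det(B + C) ≤ (1 + κ)·det(B), then xᵀ C x ≤ κ · xᵀ B x for every x ∈ ℝ^d; i.e., C ⪯ κ B in the Loewner order. -/
/-!
Factor `B = Sᴴ S` with `S` invertible and write `C = Sᴴ M S`; then `M ⪰ 0`,
`det (B + C) = det B · det (1 + M)`, and `κ B - C = Sᴴ (κ - M) S`, so it suffices to treat
`B = 1`. If `μᵢ ≥ 0` are the eigenvalues of `M`, then `1 + μⱼ ≤ ∏ᵢ (1 + μᵢ) = det (1 + M) ≤ 1 + κ`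
for every `j`, i.e. the spectrum of `M` lies below `κ`, which is `M ⪯ κ`.
-/

open Matrix Finset
open scoped MatrixOrder ComplexOrder

theorem IsUnit.exists_eq_star_mul_mul {R : Type*} [Monoid R] [StarMul R] {s : R} (hs : IsUnit s)
    (c : R) : ∃ m, c = star s * m * s := by
  obtain ⟨u, rfl⟩ := hs
  refine ⟨star ↑u⁻¹ * c * ↑u⁻¹, ?_⟩
  calc c = star (↑u⁻¹ * ↑u : R) * c * (↑u⁻¹ * ↑u) := by simp
    _ = _ := by simp only [star_mul, mul_assoc]

namespace Matrix

variable {n : Type*} [Fintype n]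

theorem dotProduct_mulVec_le_of_posSemidef_sub {A B : Matrix n n ℝ} (h : (B - A).PosSemidef)
    (x : n → ℝ) : x ⬝ᵥ A *ᵥ x ≤ x ⬝ᵥ B *ᵥ x := by
  have := h.dotProduct_mulVec_nonneg x
  rwa [star_trivial, sub_mulVec, dotProduct_sub, sub_nonneg] at this

variable [DecidableEq n]

theorem PosDef.exists_isUnit_eq_star_mul_self {𝕜 : Type*} [RCLike 𝕜] {B : Matrix n n 𝕜}
    (hB : B.PosDef) : ∃ S, IsUnit S ∧ B = star S * S :=
  ⟨CFC.sqrt B, (isStrictlyPositive_iff_posDef.2 hB).isUnit_cfcSqrt, by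
    rw [(CFC.sqrt_nonneg B).isSelfAdjoint.star_eq, CFC.sqrt_mul_sqrt_self B hB.posSemidef.nonneg]⟩

theorem IsHermitian.det_cfc {𝕜 : Type*} [RCLike 𝕜] {A : Matrix n n 𝕜} (hA : A.IsHermitian)
    (f : ℝ → ℝ) : (cfc f A).det = ∏ i, (f (hA.eigenvalues i) : 𝕜) := by
  rw [hA.cfc_eq f, IsHermitian.cfc, Unitary.conjStarAlgAut_apply,
    det_conj_of_mul_eq_one (Unitary.mul_star_self_of_mem hA.eigenvectorUnitary.2)
      (Unitary.star_mul_self_of_mem hA.eigenvectorUnitary.2), det_diagonal]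
  rfl

theorem PosSemidef.eigenvalues_le_of_det_one_add_le {M : Matrix n n ℝ} (hM : M.PosSemidef)
    {κ : ℝ} (hdet : (1 + M).det ≤ 1 + κ) (j : n) : hM.isHermitian.eigenvalues j ≤ κ := by
  set μ := hM.isHermitian.eigenvalues
  have hprod : (1 + M).det = ∏ i, (1 + μ i) := by
    have := hM.isHermitian.det_cfc (1 + ·)
    rwa [cfc_const_add (1 : ℝ) (fun x => x) M, cfc_id' ℝ M, Algebra.algebraMap_eq_smul_one,
      one_smul] at this
  have hsingle : 1 + μ j ≤ ∏ i, (1 + μ i) := by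
    simpa using prod_le_prod_of_subset_of_one_le (f := fun i => 1 + μ i)
      (singleton_subset_iff.2 (mem_univ j))
      (fun i _ => by linarith [hM.eigenvalues_nonneg i])
      (fun i _ _ => by linarith [hM.eigenvalues_nonneg i])
  linarith

theorem IsHermitian.posSemidef_smul_one_sub_of_eigenvalues_le {M : Matrix n n ℝ}
    (hM : M.IsHermitian) {κ : ℝ} (h : ∀ i, hM.eigenvalues i ≤ κ) : (κ • 1 - M).PosSemidef := by
  rw [← le_iff, ← Algebra.algebraMap_eq_smul_one, le_algebraMap_iff_spectrum_le hM,
    hM.spectrum_real_eq_range_eigenvalues]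
  rintro - ⟨i, rfl⟩
  exact h i

theorem PosSemidef.posSemidef_smul_one_sub_of_det_one_add_le {M : Matrix n n ℝ}
    (hM : M.PosSemidef) {κ : ℝ} (hdet : (1 + M).det ≤ 1 + κ) : (κ • 1 - M).PosSemidef :=
  hM.isHermitian.posSemidef_smul_one_sub_of_eigenvalues_le
    (hM.eigenvalues_le_of_det_one_add_le hdet)

end Matrix

theorem stmt4_general {d : ℕ} (B C : Matrix (Fin d) (Fin d) ℝ) (κ : ℝ)
    (hB : B.PosDef) (hC : C.PosSemidef)
    (hdet : (B + C).det ≤ (1 + κ) * B.det) :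
    (∀ x : Fin d → ℝ, x ⬝ᵥ C *ᵥ x ≤ κ * (x ⬝ᵥ B *ᵥ x)) ∧ (κ • B - C).PosSemidef := by
  have hBdet := hB.det_pos
  obtain ⟨S, hS, rfl⟩ := hB.exists_isUnit_eq_star_mul_self
  obtain ⟨M, rfl⟩ := hS.exists_eq_star_mul_mul C
  have hM : M.PosSemidef := hS.posSemidef_star_left_conjugate_iff.mp hC
  have hdetM : (1 + M).det ≤ 1 + κ := by
    have hsum : star S * S + star S * M * S = star S * (1 + M) * S := by
      rw [Matrix.mul_add, Matrix.add_mul, Matrix.mul_one]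
    have hfactor : (star S * (1 + M) * S).det = (star S * S).det * (1 + M).det := by
      simp only [det_mul]
      ring
    rw [hsum, hfactor, mul_comm (1 + κ)] at hdet
    exact le_of_mul_le_mul_left hdet hBdet
  have hdiff : κ • (star S * S) - star S * M * S = star S * (κ • 1 - M) * S := by
    rw [Matrix.mul_sub, Matrix.sub_mul, Matrix.mul_smul, Matrix.smul_mul, Matrix.mul_one]
  have hmain : (κ • (star S * S) - star S * M * S).PosSemidef := by
    rw [hdiff, hS.posSemidef_star_left_conjugate_iff]
    exact hM.posSemidef_smul_one_sub_of_det_one_add_le hdetM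
  refine ⟨fun x => ?_, hmain⟩
  simpa only [smul_mulVec, dotProduct_smul, smul_eq_mul] using
    dotProduct_mulVec_le_of_posSemidef_sub hmain x

/-- If `B ≻ 0`, `C ⪰ 0`, `κ > 0` and `det(B + C) ≤ (1 + κ) det(B)`, then
`xᵀCx ≤ κ xᵀBx` for all `x`, i.e. `C ⪯ κ B` in the Loewner order. -/
theorem stmt4 {d : ℕ} (B C : Matrix (Fin d) (Fin d) ℝ) (κ : ℝ)
    (hB : B.PosDef) (hC : C.PosSemidef) (hκ : 0 < κ)
    (hdet : (B + C).det ≤ (1 + κ) * B.det) :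
    (∀ x : Fin d → ℝ, x ⬝ᵥ C *ᵥ x ≤ κ * (x ⬝ᵥ B *ᵥ x)) ∧ (κ • B - C).PosSemidef :=
  stmt4_general B C κ hB hC hdet
end

section
/- Let A be a finite nonempty set and μ, r̂, w : A → ℝ with |r̂(a) − μ(a)| ≤ w(a) for all a ∈ A, and let A₀ = { a ∈ A : r̂(a) + w(a) ≥ max_{a' ∈ A} (r̂(a') − w(a')) }. Then for every b ∈ A₀: max_{a ∈ A₀} μ(a) − μ(b) ≤ 4 · max_{a ∈ A₀} w(a). -/
/-- Regret bound after the initial screening: for any `b` in the screened set `A₀`,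
`max_{a ∈ A₀} μ(a) − μ(b) ≤ 4 max_{a ∈ A₀} w(a)`. -/
theorem stmt10 {α : Type*} (A : Finset α) (hA : A.Nonempty)
    (μ rhat w : α → ℝ)
    (hgood : ∀ a ∈ A, |rhat a - μ a| ≤ w a)
    (A0 : Finset α)
    (hA0 : ∀ a, a ∈ A0 ↔ a ∈ A ∧ A.sup' hA (fun a' => rhat a' - w a') ≤ rhat a + w a)
    (b : α) (hb : b ∈ A0) :
    A0.sup' ⟨b, hb⟩ μ - μ b ≤ 4 * A0.sup' ⟨b, hb⟩ w := by
  obtain ⟨a, haA0, ha⟩ := Finset.exists_mem_eq_sup' ⟨b, hb⟩ μ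
  rw [ha]
  obtain ⟨haA, haM⟩ := (hA0 a).mp haA0
  obtain ⟨hbA, hbM⟩ := (hA0 b).mp hb
  have hwa : w a ≤ A0.sup' ⟨b, hb⟩ w := Finset.le_sup' w haA0
  have hwb : w b ≤ A0.sup' ⟨b, hb⟩ w := Finset.le_sup' w hb
  have hMa : rhat a - w a ≤ A.sup' hA (fun a' => rhat a' - w a') :=
    Finset.le_sup' (fun a' => rhat a' - w a') haA
  have h1 := abs_le.mp (hgood a haA)
  have h2 := abs_le.mp (hgood b hbA)
  linarith [h1.1, h1.2, h2.1, h2.2]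
end

section
/- Let A_s be a finite nonempty set, μ, r̂, w : A_s → ℝ, and w̄ > 0 with |r̂(a) − μ(a)| ≤ w(a) ≤ w̄ for all a ∈ A_s, and let A_{s+1} = { a ∈ A_s : r̂(a) ≥ max_{a' ∈ A_s} r̂(a') − 2 w̄ }. Then for every b ∈ A_{s+1}: max_{a ∈ A_s} μ(a) − μ(b) ≤ 4 w̄. -/
/-- Regret bound after a layered elimination step: for any `b` in the eliminated set
`A_{s+1}`, `max_{a ∈ A_s} μ(a) − μ(b) ≤ 4 w̄`. -/
theorem stmt11 {α : Type*} (As : Finset α) (hAs : As.Nonempty)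
    (μ rhat w : α → ℝ) (wbar : ℝ) (hwbar : 0 < wbar)
    (hgood : ∀ a ∈ As, |rhat a - μ a| ≤ w a ∧ w a ≤ wbar)
    (Anext : Finset α)
    (hAnext : ∀ a, a ∈ Anext ↔ a ∈ As ∧ As.sup' hAs rhat - 2 * wbar ≤ rhat a)
    (b : α) (hb : b ∈ Anext) :
    As.sup' hAs μ - μ b ≤ 4 * wbar := by
  obtain ⟨hbAs, hbr⟩ := (hAnext b).mp hb
  obtain ⟨hb1, hb2⟩ := hgood b hbAs
  rw [abs_le] at hb1
  rw [sub_le_iff_le_add]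
  rw [Finset.sup'_le_iff]
  intro a ha
  obtain ⟨ha1, ha2⟩ := hgood a ha
  rw [abs_le] at ha1
  have hsup : rhat a ≤ As.sup' hAs rhat := Finset.le_sup' rhat ha
  linarith
end

section
/- Let x_1, ..., x_n ∈ ℝ^d with ‖x_i‖_2 ≤ 1 for all i, and let A = I + ∑_{i=1}^n x_i x_iᵀ. Then det(A) ≤ (1 + n/d)^d; equivalently, log det(A) ≤ d · log(1 + n/d). -/
/-!
Since `A = I + ∑ xᵢ xᵢᵀ` is positive definite, its determinant is the product of its
eigenvalues and its trace is their sum. AM-GM bounds the product by `(tr A / d)^d`, and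
`tr A = d + ∑ ‖xᵢ‖² ≤ d + n`. The logarithmic form follows since `det A > 0`.
-/

open Matrix Finset

theorem Real.prod_le_arith_mean_pow {ι : Type*} (s : Finset ι) (z : ι → ℝ)
    (hz : ∀ i ∈ s, 0 ≤ z i) : ∏ i ∈ s, z i ≤ ((∑ i ∈ s, z i) / #s) ^ #s := by
  rcases s.eq_empty_or_nonempty with rfl | hs
  · simp
  have hcard : (0 : ℝ) < #s := by exact_mod_cast hs.card_pos
  have amgm := Real.geom_mean_le_arith_mean_weighted s (fun _ ↦ (#s : ℝ)⁻¹) z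
    (fun _ _ ↦ by positivity) (by simp [hcard.ne']) hz
  have hprod : 0 ≤ ∏ i ∈ s, z i := prod_nonneg hz
  calc ∏ i ∈ s, z i = ((∏ i ∈ s, z i) ^ (#s : ℝ)⁻¹) ^ #s := by
        rw [← Real.rpow_natCast, ← Real.rpow_mul hprod, inv_mul_cancel₀ hcard.ne',
          Real.rpow_one]
    _ ≤ ((∑ i ∈ s, z i) / #s) ^ #s := by
        rw [Real.finsetProd_rpow s z hz, ← mul_sum, inv_mul_eq_div] at amgm
        exact pow_le_pow_left₀ (by positivity) amgm _

section

variable {n : Type*} [Fintype n] [DecidableEq n] {A : Matrix n n ℝ}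

theorem Matrix.PosSemidef.det_le_trace_div_card_pow (hA : A.PosSemidef) :
    A.det ≤ (A.trace / Fintype.card n) ^ Fintype.card n := by
  rw [hA.isHermitian.det_eq_prod_eigenvalues, hA.isHermitian.trace_eq_sum_eigenvalues]
  simpa using Real.prod_le_arith_mean_pow univ hA.isHermitian.eigenvalues
    fun i _ ↦ hA.eigenvalues_nonneg i

theorem Matrix.PosSemidef.det_le_one_add_div_card_pow (hA : A.PosSemidef) {t : ℝ}
    (htr : A.trace ≤ Fintype.card n + t) :
    A.det ≤ (1 + t / Fintype.card n) ^ Fintype.card n := by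
  refine hA.det_le_trace_div_card_pow.trans
    (pow_le_pow_left₀ (div_nonneg hA.trace_nonneg (Nat.cast_nonneg _)) ?_ _)
  calc A.trace / Fintype.card n ≤ (Fintype.card n + t) / Fintype.card n := by gcongr
    _ ≤ 1 + t / Fintype.card n := by rw [add_div]; gcongr; exact div_self_le_one _

end

theorem dotProduct_self_le_one_of_l2norm_le_one {d : ℕ} {x : Fin d → ℝ}
    (hx : l2norm x ≤ 1) : x ⬝ᵥ x ≤ 1 := by
  have hsq : x ⬝ᵥ x = l2norm x ^ 2 := by
    rw [l2norm, Real.sq_sqrt (by positivity)]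
    simp [dotProduct, sq]
  rw [hsq]
  exact pow_le_one₀ (Real.sqrt_nonneg _) hx

theorem posDef_one_add_sum_vecMulVec_self {n ι : Type*} [Fintype n] [DecidableEq n]
    (s : Finset ι) (x : ι → n → ℝ) : (1 + ∑ i ∈ s, vecMulVec (x i) (x i)).PosDef :=
  PosDef.one.add_posSemidef <| posSemidef_sum s fun i _ ↦ by
    simpa using posSemidef_vecMulVec_self_star (x i)

theorem trace_one_add_sum_vecMulVec_self_le {d : ℕ} {ι : Type*} (s : Finset ι)
    (x : ι → Fin d → ℝ)
    (hx : ∀ i ∈ s, l2norm (x i) ≤ 1) :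
    (1 + ∑ i ∈ s, vecMulVec (x i) (x i)).trace ≤ d + #s := by
  rw [trace_add, trace_one, trace_sum, Fintype.card_fin]
  gcongr
  simpa using sum_le_card_nsmul s (fun i ↦ x i ⬝ᵥ x i) 1 fun i hi ↦
    dotProduct_self_le_one_of_l2norm_le_one (hx i hi)

/-- Determinant bound: if `‖x_i‖₂ ≤ 1` and `A = I + ∑ x_i x_iᵀ`, then
`det A ≤ (1 + n/d)^d`, equivalently `log det A ≤ d log(1 + n/d)`. -/
theorem stmt12 {d : ℕ} (n : ℕ) (x : ℕ → Fin d → ℝ)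
    (hx : ∀ i < n, l2norm (x i) ≤ 1)
    (A : Matrix (Fin d) (Fin d) ℝ)
    (hA : A = 1 + ∑ i ∈ Finset.range n, vecMulVec (x i) (x i)) :
    A.det ≤ (1 + (n : ℝ) / d) ^ d ∧
      Real.log A.det ≤ (d : ℝ) * Real.log (1 + (n : ℝ) / d) := by
  have hpos : A.PosDef := hA ▸ posDef_one_add_sum_vecMulVec_self _ x
  have htr : A.trace ≤ d + n := by
    simpa [hA] using
      trace_one_add_sum_vecMulVec_self_le (range n) x fun i hi ↦ hx i (mem_range.mp hi)
  have hdet : A.det ≤ (1 + (n : ℝ) / d) ^ d := by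
    simpa using hpos.posSemidef.det_le_one_add_div_card_pow (by simpa using htr)
  refine ⟨hdet, ?_⟩
  rw [← Real.log_pow]
  exact Real.log_le_log hpos.det_pos hdet
end
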